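/- arXiv:2202.10299 — 4 statements merged into one kernel-verified Lean document; each statement's English description precedes it below -/
import Mathlib

section
/- Let H be a complex Hilbert space and let A be a pure isometry on H. If M ⊆ H is a closed subspace invariant under A, then M = ⊕_{j=0}^∞ Aʲ(R) (an orthogonal direct sum, i.e. M is the closure of the span of the pairwise orthogonal subspaces Aʲ(R), j ≥ 0), where R = M ⊖ A(M); moreover R is the unique wandering subspace for A satisfying this decomposition. -/
/-!
Since `A` is an isometry, `A(M)` is closed and `M = A(M) ⊕ R`; applying `Aⁿ` gives
`Aⁿ(M) = Aⁿ⁺¹(M) ⊕ Aⁿ(R)`. Hence an element of `M` orthogonal to every `Aʲ(R)` lies in every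
`Aⁿ(M)`, and purity forces it to vanish: this is the decomposition. The `Aʲ(R)` are pairwise
orthogonal because `R ⊥ A(M) ⊇ Aʲ(R)` for `j ≥ 1` and `A` preserves inner products. For
uniqueness, a wandering `R'` whose orbit is dense in `M` is orthogonal to `A(M)`, so `R' ⊆ R`,
and `R ⊖ R'` is orthogonal to the whole orbit of `R'`, hence to `M`, hence zero.
-/

open scoped InnerProductSpace

theorem Isometry.iterate {α : Type*} [PseudoEMetricSpace α] {f : α → α} (hf : Isometry f) :
    ∀ n : ℕ, Isometry f^[n]
  | 0 => isometry_id
  | n + 1 => (hf.iterate n).comp hf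

namespace Submodule

variable {𝕜 E F : Type*} [RCLike 𝕜] [NormedAddCommGroup E] [InnerProductSpace 𝕜 E]
  [NormedAddCommGroup F] [InnerProductSpace 𝕜 F]

theorem IsOrtho.map_of_isometry {f : E →ₗ[𝕜] F} (hf : Isometry f) {U V : Submodule 𝕜 E}
    (h : U ⟂ V) : U.map f ⟂ V.map f :=
  h.map ⟨f, (AddMonoidHomClass.isometry_iff_norm f).1 hf⟩

theorem IsOrtho.mem_of_mem_sup_of_mem_orthogonal {K L : Submodule 𝕜 E} (h : K ⟂ L) {x : E}
    (hx : x ∈ K ⊔ L) (hxL : x ∈ Lᗮ) : x ∈ K := by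
  obtain ⟨k, hk, l, hl, rfl⟩ := mem_sup.1 hx
  have hlL : l ∈ Lᗮ := by simpa using Lᗮ.sub_mem hxL (h.le hk)
  rw [disjoint_def.1 L.orthogonal_disjoint l hl hlL, add_zero]
  exact hk

theorem isClosed_map_of_isometry [CompleteSpace E] {f : E →ₗ[𝕜] F} (hf : Isometry f)
    {M : Submodule 𝕜 E} (hM : IsClosed (M : Set E)) : IsClosed (M.map f : Set F) := by
  rw [map_coe]
  exact hf.isClosedEmbedding.isClosedMap _ hM

theorem eq_of_le_of_orthogonal_inf_eq_bot {K M : Submodule 𝕜 E} [K.HasOrthogonalProjection]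
    (hKM : K ≤ M) (h : Kᗮ ⊓ M = ⊥) : K = M := by
  rw [← sup_orthogonal_inf_of_hasOrthogonalProjection hKM, h, sup_bot_eq]

end Submodule

open Submodule

section Wandering

variable {𝕜 E : Type*} [RCLike 𝕜] [NormedAddCommGroup E] [InnerProductSpace 𝕜 E]
  {T : Module.End 𝕜 E} {M R : Submodule 𝕜 E}

theorem Isometry.moduleEnd_pow (hT : Isometry T) (n : ℕ) : Isometry ⇑(T ^ n) := by
  rw [Module.End.coe_pow]
  exact hT.iterate n

theorem map_pow_le_of_mem_invtSubmodule (hM : M ∈ T.invtSubmodule) (n : ℕ) :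
    M.map (T ^ n) ≤ M := by
  induction n with
  | zero => rw [pow_zero, Module.End.one_eq_id, map_id]
  | succ n ih =>
    rw [pow_succ', Module.End.mul_eq_comp, map_comp]
    exact (map_mono ih).trans ((Module.End.mem_invtSubmodule_iff_map_le T).1 hM)

theorem map_pow_le_map_of_mem_invtSubmodule (hM : M ∈ T.invtSubmodule) {j : ℕ} (hj : 1 ≤ j) :
    M.map (T ^ j) ≤ M.map T := by
  obtain ⟨k, rfl⟩ := Nat.exists_eq_add_of_le' hj
  rw [pow_succ', Module.End.mul_eq_comp, map_comp]
  exact map_mono (map_pow_le_of_mem_invtSubmodule hM k)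

variable (T) in
/-- The paper's `⊕_{j ≥ 0} Tʲ(R)` before taking the closure. -/
def orbitSpan (R : Submodule 𝕜 E) : Submodule 𝕜 E := ⨆ j : ℕ, R.map (T ^ j)

variable (T) in
def IsWandering (R : Submodule 𝕜 E) : Prop := ∀ j : ℕ, 1 ≤ j → R ⟂ R.map (T ^ j)

theorem le_orbitSpan (T : Module.End 𝕜 E) (R : Submodule 𝕜 E) : R ≤ orbitSpan T R := by
  have h := le_iSup (fun j => R.map (T ^ j)) 0
  rwa [pow_zero, Module.End.one_eq_id, map_id] at h

theorem IsWandering.isOrtho_map_pow (hT : Isometry T) (hR : IsWandering T R) {i j : ℕ}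
    (hij : i ≠ j) : R.map (T ^ i) ⟂ R.map (T ^ j) := by
  wlog hlt : i < j generalizing i j
  · exact (this hij.symm (by omega)).symm
  obtain ⟨k, rfl⟩ := Nat.exists_eq_add_of_lt hlt
  rw [add_assoc, pow_add, Module.End.mul_eq_comp, map_comp]
  exact (hR (k + 1) (by omega)).map_of_isometry (hT.moduleEnd_pow i)

theorem isWandering_inf_orthogonal_map (hM : M ∈ T.invtSubmodule) :
    IsWandering T (M ⊓ (M.map T)ᗮ) := fun _ hj =>
  (isOrtho_orthogonal_left (M.map T)).mono inf_le_right
    ((map_mono inf_le_left).trans (map_pow_le_map_of_mem_invtSubmodule hM hj))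

theorem orbitSpan_le (hM : M ∈ T.invtSubmodule) (hRM : R ≤ M) : orbitSpan T R ≤ M :=
  iSup_le fun j => (map_mono hRM).trans (map_pow_le_of_mem_invtSubmodule hM j)

theorem map_pow_eq_map_pow_succ_sup (hM : M ∈ T.invtSubmodule) [(M.map T).HasOrthogonalProjection]
    (n : ℕ) : M.map (T ^ n) = M.map (T ^ (n + 1)) ⊔ (M ⊓ (M.map T)ᗮ).map (T ^ n) := by
  conv_lhs => rw [← sup_orthogonal_inf_of_hasOrthogonalProjection
    ((Module.End.mem_invtSubmodule_iff_map_le T).1 hM)]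
  rw [Submodule.map_sup, inf_comm, pow_succ, Module.End.mul_eq_comp, map_comp]

theorem mem_map_pow_of_mem_orthogonal_orbitSpan (hT : Isometry T) (hM : M ∈ T.invtSubmodule)
    [(M.map T).HasOrthogonalProjection] {g : E} (hgM : g ∈ M)
    (hg : g ∈ (orbitSpan T (M ⊓ (M.map T)ᗮ))ᗮ) (n : ℕ) : g ∈ M.map (T ^ n) := by
  induction n with
  | zero => rwa [pow_zero, Module.End.one_eq_id, map_id]
  | succ n ih =>
    have hortho : M.map (T ^ (n + 1)) ⟂ (M ⊓ (M.map T)ᗮ).map (T ^ n) := by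
      rw [pow_succ, Module.End.mul_eq_comp, map_comp]
      exact ((isOrtho_orthogonal_right (M.map T)).mono_right inf_le_right).map_of_isometry
        (hT.moduleEnd_pow n)
    refine hortho.mem_of_mem_sup_of_mem_orthogonal ?_ ?_
    · rwa [← map_pow_eq_map_pow_succ_sup hM]
    · exact orthogonal_le (le_iSup _ n) hg

theorem inf_orthogonal_orbitSpan_eq_bot (hT : Isometry T) (hM : M ∈ T.invtSubmodule)
    [(M.map T).HasOrthogonalProjection] (hpure : ⨅ j : ℕ, (⊤ : Submodule 𝕜 E).map (T ^ j) = ⊥) :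
    M ⊓ (orbitSpan T (M ⊓ (M.map T)ᗮ))ᗮ = ⊥ := by
  refine eq_bot_iff.2 fun g hg => ?_
  rw [← hpure, mem_iInf]
  exact fun n => map_mono le_top (mem_map_pow_of_mem_orthogonal_orbitSpan hT hM hg.1 hg.2 n)

theorem topologicalClosure_orbitSpan_eq [CompleteSpace E] (hT : Isometry T) (hMc : IsClosed (M : Set E))
    (hM : M ∈ T.invtSubmodule) (hpure : ⨅ j : ℕ, (⊤ : Submodule 𝕜 E).map (T ^ j) = ⊥) :
    (orbitSpan T (M ⊓ (M.map T)ᗮ)).topologicalClosure = M := by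
  have : CompleteSpace (M.map T) := (isClosed_map_of_isometry hT hMc).completeSpace_coe
  refine eq_of_le_of_orthogonal_inf_eq_bot
    (topologicalClosure_minimal _ (orbitSpan_le hM inf_le_left) hMc) ?_
  rw [orthogonal_closure, inf_comm]
  exact inf_orthogonal_orbitSpan_eq_bot hT hM hpure

theorem eq_inf_orthogonal_map_of_isWandering (hT : Isometry T) (hM : M ∈ T.invtSubmodule)
    [R.HasOrthogonalProjection] (hR : IsWandering T R)
    (hMR : M = (orbitSpan T R).topologicalClosure) : R = M ⊓ (M.map T)ᗮ := by
  have hRM : R ≤ M := hMR ▸ (le_orbitSpan T R).trans (le_topologicalClosure _)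
  -- `T(M) ⊥ R` is a closed condition on `M`, and holds on the dense part `T(orbitSpan T R)`.
  have hTM : R ⟂ M.map T := by
    refine IsOrtho.symm (map_le_iff_le_comap.2 ?_)
    rw [hMR]
    refine topologicalClosure_minimal _ (iSup_le fun j => ?_)
      (R.isClosed_orthogonal.preimage hT.continuous)
    rw [← map_le_iff_le_comap, ← map_comp, ← Module.End.mul_eq_comp, ← pow_succ']
    exact (hR (j + 1) (by omega)).symm.le
  have hortho : Rᗮ ⊓ (M ⊓ (M.map T)ᗮ) ⟂ orbitSpan T R := by
    refine isOrtho_iSup_right.2 fun j => ?_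
    rcases Nat.eq_zero_or_pos j with rfl | hj
    · rw [pow_zero, Module.End.one_eq_id, map_id]
      exact (isOrtho_orthogonal_left R).mono_left inf_le_left
    · exact (isOrtho_orthogonal_left (M.map T)).mono (inf_le_right.trans inf_le_right)
        ((map_mono hRM).trans (map_pow_le_map_of_mem_invtSubmodule hM hj))
  refine eq_of_le_of_orthogonal_inf_eq_bot (le_inf hRM hTM.le) (eq_bot_iff.2 fun x hx => ?_)
  have hxM : x ∈ Mᗮ := by
    rw [hMR, orthogonal_closure]
    exact hortho.le hx
  exact disjoint_def.1 M.orthogonal_disjoint x hx.2.1 hxM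

end Wandering

theorem statement2 {H : Type*} [NormedAddCommGroup H] [InnerProductSpace ℂ H] [CompleteSpace H]
    (A : H →L[ℂ] H) (hA : Isometry A)
    (hpure : (⨅ j : ℕ, Submodule.map ((A ^ j : H →L[ℂ] H) : H →ₗ[ℂ] H) (⊤ : Submodule ℂ H)) = ⊥)
    (M : Submodule ℂ H) (hMc : IsClosed ((M : Set H))) (hMinv : ∀ f ∈ M, A f ∈ M)
    (R : Submodule ℂ H) (hR : R = M ⊓ (Submodule.map (A : H →ₗ[ℂ] H) M)ᗮ) :
    (∀ i j : ℕ, i ≠ j → ∀ x ∈ Submodule.map ((A ^ i : H →L[ℂ] H) : H →ₗ[ℂ] H) R, ∀ y ∈ Submodule.map ((A ^ j : H →L[ℂ] H) : H →ₗ[ℂ] H) R,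
      ⟪x, y⟫_ℂ = 0) ∧
    M = (⨆ j : ℕ, Submodule.map ((A ^ j : H →L[ℂ] H) : H →ₗ[ℂ] H) R).topologicalClosure ∧
    (∀ R' : Submodule ℂ H, IsClosed ((R' : Set H)) →
      (∀ j : ℕ, 1 ≤ j → ∀ x ∈ R', ∀ y ∈ Submodule.map ((A ^ j : H →L[ℂ] H) : H →ₗ[ℂ] H) R', ⟪x, y⟫_ℂ = 0) →
      M = (⨆ j : ℕ, Submodule.map ((A ^ j : H →L[ℂ] H) : H →ₗ[ℂ] H) R').topologicalClosure → R' = R) := by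
  simp only [ContinuousLinearMap.toLinearMap_pow] at hpure ⊢
  have hT : Isometry (A : Module.End ℂ H) := hA
  have hM : M ∈ Module.End.invtSubmodule (A : Module.End ℂ H) := hMinv
  subst hR
  refine ⟨fun i j hij => isOrtho_iff_inner_eq.1
      ((isWandering_inf_orthogonal_map hM).isOrtho_map_pow hT hij),
    (topologicalClosure_orbitSpan_eq hT hMc hM hpure).symm, fun R' hR'c hR'w hMR' => ?_⟩
  have : CompleteSpace R' := hR'c.completeSpace_coe
  exact eq_inf_orthogonal_map_of_isWandering hT hM
    (fun j hj => isOrtho_iff_inner_eq.2 (hR'w j hj)) hMR'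
end

section
/- Let K be a separable complex Hilbert space and let M ⊆ H²_K be a closed subspace invariant under the unilateral shift S. Then the wandering subspace R = M ⊖ S(M) satisfies dim(R) ≤ dim(K), where dim denotes Hilbert space dimension (the cardinality of an orthonormal basis). -/
noncomputable section

open MeasureTheory Complex Submodule
open scoped InnerProductSpace ENNReal ComplexConjugate

set_option synthInstance.maxHeartbeats 1000000
set_option maxHeartbeats 1600000

namespace ShiftPaper

instance : Fact ((0:ℝ) < 1) := ⟨one_pos⟩

/-- The circle, modelled as `ℝ/ℤ`. -/
abbrev 𝕋 : Type := UnitAddCircle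

/-- The normalized Haar (Lebesgue) probability measure on the circle. -/
abbrev μT : Measure 𝕋 := AddCircle.haarAddCircle

/-- The space `L²(𝕋, E)` of square-integrable `E`-valued functions on the circle. -/
abbrev L2 (E : Type*) [NormedAddCommGroup E] := Lp E 2 μT

lemma norm_fourier (n : ℤ) (t : 𝕋) : ‖fourier n t‖ = 1 := by
  rw [fourier_apply, Circle.norm_coe]

section mulF

variable {E : Type*} [NormedAddCommGroup E] [NormedSpace ℂ E]

lemma memLp_mulF (n : ℤ) (f : L2 E) :
    MemLp (fun t => fourier n t • (f : 𝕋 → E) t) 2 μT := by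
  refine MemLp.of_le (Lp.memLp f)
    (((fourier n).continuous.aestronglyMeasurable).smul (Lp.aestronglyMeasurable f)) ?_
  refine Filter.Eventually.of_forall fun t => ?_
  rw [norm_smul, norm_fourier, one_mul]

/-- Multiplication by `fourier n` (i.e. by `λ ↦ λⁿ`) as a bounded operator on `L²(𝕋, E)`.
For `n = 1` this is the bilateral shift `U`; for general `n : ℤ` it is `Uⁿ`. -/
def mulF (n : ℤ) : L2 E →L[ℂ] L2 E :=
  LinearMap.mkContinuous
    { toFun := fun f => (memLp_mulF n f).toLp _
      map_add' := fun f g => by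
        rw [← MemLp.toLp_add (memLp_mulF n f) (memLp_mulF n g)]
        refine MemLp.toLp_congr _ _ ?_
        filter_upwards [Lp.coeFn_add f g] with t ht
        simp only [ht, Pi.add_apply, smul_add]
      map_smul' := fun c f => by
        simp only [RingHom.id_apply]
        rw [← MemLp.toLp_const_smul c (memLp_mulF n f)]
        refine MemLp.toLp_congr _ _ ?_
        filter_upwards [Lp.coeFn_smul c f] with t ht
        rw [ht]
        simp only [Pi.smul_apply]
        rw [smul_comm] }
    1
    (fun f => by
      simp only [LinearMap.coe_mk, AddHom.coe_mk, one_mul]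
      rw [Lp.norm_toLp _ (memLp_mulF n f), Lp.norm_def]
      refine le_of_eq (congrArg ENNReal.toReal ?_)
      refine eLpNorm_congr_norm_ae ?_
      refine Filter.Eventually.of_forall fun t => ?_
      rw [norm_smul, norm_fourier, one_mul])

lemma coeFn_mulF (n : ℤ) (f : L2 E) :
    (mulF n f : 𝕋 → E) =ᵐ[μT] fun t => fourier n t • (f : 𝕋 → E) t :=
  MemLp.coeFn_toLp (memLp_mulF n f)

end mulF

section HardySpace

variable (K : Type) [NormedAddCommGroup K] [InnerProductSpace ℂ K] [CompleteSpace K]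

/-- The continuous function `t ↦ fourier n t • x`. -/
def fourierSmulCM (n : ℤ) (x : K) : C(𝕋, K) :=
  ⟨fun t => fourier n t • x, (fourier n).continuous.smul continuous_const⟩

/-- The element of `L²(𝕋, K)` given by `t ↦ fourier n t • x`. -/
def expVec (n : ℤ) (x : K) : L2 K := ContinuousMap.toLp 2 μT ℂ (fourierSmulCM K n x)

lemma coeFn_expVec (n : ℤ) (x : K) :
    (expVec K n x : 𝕋 → K) =ᵐ[μT] fun t => fourier n t • x :=
  ContinuousMap.coeFn_toLp (𝕜 := ℂ) μT (fourierSmulCM K n x)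

/-- The Hardy space `H²(𝕋, K)`, as the subspace of `L²(𝕋, K)` of functions all of whose
weak Fourier coefficients of negative index vanish (equivalently, all of whose coordinate
functions with respect to an orthonormal basis of `K` lie in the scalar Hardy space `H²`). -/
def Hardy : Submodule ℂ (L2 K) :=
  ⨅ (n : ℤ) (_ : n < 0) (x : K), LinearMap.ker (innerSL ℂ (expVec K n x) : L2 K →ₗ[ℂ] ℂ)

lemma isClosed_Hardy : IsClosed ((Hardy K : Set (L2 K))) := by
  have h : (Hardy K : Set (L2 K)) = ⋂ (n : ℤ) (_ : n < 0) (x : K),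
      (LinearMap.ker (innerSL ℂ (expVec K n x) : L2 K →ₗ[ℂ] ℂ) : Set (L2 K)) := by
    simp only [Hardy, Submodule.coe_iInf]
  rw [h]
  exact isClosed_iInter fun n => isClosed_iInter fun _ => isClosed_iInter fun x =>
    (ContinuousLinearMap.isClosed_ker _)

/-- The Hardy space `H²(𝕋, K)` as a Hilbert space in its own right. -/
abbrev H2 := ↥(Hardy K)

instance : CompleteSpace (H2 K) := (isClosed_Hardy K).completeSpace_coe

end HardySpace


section Shift

variable (K : Type) [NormedAddCommGroup K] [InnerProductSpace ℂ K] [CompleteSpace K]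

lemma inner_expVec_mulF (n : ℤ) (x : K) (f : L2 K) :
    (inner ℂ (expVec K n x) (mulF 1 f) : ℂ) = inner ℂ (expVec K (n - 1) x) f := by
  rw [MeasureTheory.L2.inner_def, MeasureTheory.L2.inner_def]
  refine integral_congr_ae ?_
  filter_upwards [coeFn_mulF 1 f, coeFn_expVec K n x, coeFn_expVec K (n-1) x] with t h1 h2 h3
  rw [h1, h2, h3, inner_smul_left, inner_smul_left, inner_smul_right,
    ← fourier_neg, ← fourier_neg, ← mul_assoc, ← fourier_add]
  have h : -n + 1 = -(n - 1) := by ring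
  rw [h]

lemma mulF_mem_hardy {f : L2 K} (hf : f ∈ Hardy K) : mulF 1 f ∈ Hardy K := by
  simp only [Hardy, Submodule.mem_iInf, LinearMap.mem_ker, ContinuousLinearMap.coe_coe, innerSL_apply_apply] at hf ⊢
  intro n hn x
  rw [inner_expVec_mulF]
  exact hf (n - 1) (by omega) x

/-- The unilateral shift `S` on the Hardy space `H²(𝕋, K)`: the restriction of the
bilateral shift (multiplication by the variable) to the Hardy space. -/
def S : H2 K →L[ℂ] H2 K where
  toLinearMap := (mulF (E := K) 1).toLinearMap.restrict
    (p := Hardy K) (q := Hardy K) (fun _ hx => mulF_mem_hardy K hx)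
  cont := by
    apply Continuous.subtype_mk
    exact (mulF (E := K) 1).continuous.comp continuous_subtype_val

/-- The operator `Ŝ` on `L²(𝕋, H²(𝕋,K))`, acting pointwisely (on the values) as the
unilateral shift `S`. -/
def Shat : L2 (H2 K) →L[ℂ] L2 (H2 K) := (S K).compLpL 2 μT

lemma integral_fourier_eq_zero {m : ℤ} (hm : m ≠ 0) :
    ∫ t : 𝕋, fourier m t ∂μT = 0 := by
  have h0 : ((0:ℤ)) ≠ m := fun h => hm h.symm
  have h : (inner ℂ (fourierLp (T := 1) 2 (0:ℤ)) (fourierLp 2 m) : ℂ) = 0 :=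
    orthonormal_fourier.2 h0
  rw [MeasureTheory.L2.inner_def] at h
  rw [← h]
  refine integral_congr_ae ?_
  filter_upwards [coeFn_fourierLp 2 (0:ℤ), coeFn_fourierLp 2 m] with t h1 h2
  rw [h1, h2]
  simp [fourier_zero]

lemma const_mem_hardy (x : K) : expVec K 0 x ∈ Hardy K := by
  simp only [Hardy, Submodule.mem_iInf, LinearMap.mem_ker, ContinuousLinearMap.coe_coe, innerSL_apply_apply]
  intro n hn y
  rw [MeasureTheory.L2.inner_def]
  have h : ∀ᵐ t ∂μT, (inner ℂ ((expVec K n y : 𝕋 → K) t) ((expVec K 0 x : 𝕋 → K) t) : ℂ)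
      = fourier (-n) t * (inner ℂ y x : ℂ) := by
    filter_upwards [coeFn_expVec K n y, coeFn_expVec K 0 x] with t h1 h2
    rw [h1, h2, inner_smul_left, inner_smul_right, ← fourier_neg, fourier_zero, one_mul]
  rw [integral_congr_ae h, integral_mul_const,
    integral_fourier_eq_zero (by omega), zero_mul]

/-- The linear embedding of `K` into `H²(𝕋,K)` as constant functions. -/
def constL : K →ₗ[ℂ] H2 K where
  toFun x := ⟨expVec K 0 x, const_mem_hardy K x⟩
  map_add' x y := by
    apply Subtype.ext
    simp only [Submodule.coe_add]
    unfold expVec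
    rw [← map_add]
    congr 1
    ext t
    simp [fourierSmulCM, smul_add]
  map_smul' c x := by
    apply Subtype.ext
    simp only [RingHom.id_apply, SetLike.val_smul]
    unfold expVec
    rw [← _root_.map_smul]
    congr 1
    ext t
    simp [fourierSmulCM]

end Shift


section RangeFunctions

variable {F : Type*} [NormedAddCommGroup F] [InnerProductSpace ℂ F] [CompleteSpace F]

/-- The orthogonal projection onto a closed subspace, as a plain function (defined to be `0`
if the subspace is not closed). -/
def projTo (N : Submodule ℂ F) (x : F) : F :=
  letI := Classical.dec (IsClosed ((N : Set F)))
  if h : IsClosed ((N : Set F)) then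
    haveI : CompleteSpace N := h.completeSpace_coe
    (orthogonalProjection N x : F)
  else 0

/-- A measurable range function in `F`: a map `J` from `𝕋` to closed subspaces of `F` such
that `t ↦ ⟪P_{J(t)} x, y⟫` is measurable for every `x, y ∈ F`. -/
def IsMeasRange (J : 𝕋 → Submodule ℂ F) : Prop :=
  (∀ t, IsClosed ((J t : Set F))) ∧
  ∀ x y : F, Measurable fun t => (inner ℂ (projTo (J t) x) y : ℂ)

/-- The set of `f ∈ L²(𝕋, E)` such that `f(t) ∈ J(t)` for a.e. `t ∈ 𝕋`. -/
def rangeSet {E : Type*} [NormedAddCommGroup E] [NormedSpace ℂ E]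
    (J : 𝕋 → Submodule ℂ E) : Set (L2 E) :=
  {f | ∀ᵐ t ∂μT, (f : 𝕋 → E) t ∈ J t}

end RangeFunctions

section OperatorNotions

variable {E : Type*} [NormedAddCommGroup E] [NormedSpace ℂ E]

/-- A subspace `M` is invariant under the bounded operator `A` if `A(M) ⊆ M`. -/
def InvariantUnder (A : E →L[ℂ] E) (M : Submodule ℂ E) : Prop :=
  ∀ f ∈ M, A f ∈ M

/-- Two bounded operators commute. -/
def CommutesWith (A B : E →L[ℂ] E) : Prop := ∀ f, A (B f) = B (A f)

variable {F : Type*} [NormedAddCommGroup F] [InnerProductSpace ℂ F]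

/-- A subspace `M` is reducing for `A` if both `M` and `M^⊥` are invariant under `A`. -/
def Reducing (A : F →L[ℂ] F) (M : Submodule ℂ F) : Prop :=
  InvariantUnder A M ∧ InvariantUnder A Mᗮ

/-- `Φ` is a partial isometry with initial space `W`: it is isometric on `W` and vanishes
on `W^⊥`. -/
def IsPartialIsometryOn (Φ : F →L[ℂ] F) (W : Submodule ℂ F) : Prop :=
  (∀ f ∈ W, ‖Φ f‖ = ‖f‖) ∧ ∀ f ∈ Wᗮ, Φ f = 0

end OperatorNotions

section FullHardy

variable (K : Type) [NormedAddCommGroup K] [InnerProductSpace ℂ K] [CompleteSpace K]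

/-- For a subspace `N ⊆ K`, the subspace `H²_N` of `H²_K`: those elements of the Hardy space
taking values in `N` almost everywhere. -/
def hardyIn (N : Submodule ℂ K) : Submodule ℂ (H2 K) where
  carrier := {g | ∀ᵐ z ∂μT, ((g : L2 K) : 𝕋 → K) z ∈ N}
  zero_mem' := by
    have h0 : ((0 : H2 K) : L2 K) = 0 := rfl
    rw [Set.mem_setOf_eq, h0]
    filter_upwards [Lp.coeFn_zero K 2 μT] with z hz
    rw [hz]
    exact N.zero_mem
  add_mem' := by
    intro a b ha hb
    have h0 : ((a + b : H2 K) : L2 K) = (a : L2 K) + (b : L2 K) := rfl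
    rw [Set.mem_setOf_eq, h0]
    filter_upwards [ha, hb, Lp.coeFn_add (a : L2 K) (b : L2 K)] with z ha' hb' hadd
    rw [hadd]
    exact N.add_mem ha' hb'
  smul_mem' := by
    intro c a ha
    have h0 : ((c • a : H2 K) : L2 K) = c • (a : L2 K) := rfl
    rw [Set.mem_setOf_eq, h0]
    filter_upwards [ha, Lp.coeFn_smul c (a : L2 K)] with z ha' hsmul
    rw [hsmul]
    exact N.smul_mem c ha'

/-- The set of `f ∈ L²(𝕋, H²_K)` with `f(t) ∈ H²_{J(t)}` for a.e. `t`. If `J` is a measurable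
range function in `K`, this is the full-Hardy subspace with base `J`. -/
def fullHardySet (J : 𝕋 → Submodule ℂ K) : Set (L2 (H2 K)) :=
  {f | ∀ᵐ t ∂μT, (f : 𝕋 → H2 K) t ∈ hardyIn K (J t)}

/-- A subspace `W ⊆ L²(𝕋, H²_K)` is full-Hardy if it is of the form
`{f : f(t) ∈ H²_{J(t)} a.e.}` for some measurable range function `J` in `K`. -/
def IsFullHardy (W : Submodule ℂ (L2 (H2 K))) : Prop :=
  ∃ J : 𝕋 → Submodule ℂ K, IsMeasRange J ∧ (W : Set (L2 (H2 K))) = fullHardySet K J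

end FullHardy

section Dimension

open scoped Classical in
/-- The Hilbert-space dimension of a subspace, as an element of `ℕ∞` (in a separable ambient
space this is the cardinality of any orthonormal basis). -/
def dimSub {F : Type*} [NormedAddCommGroup F] [InnerProductSpace ℂ F]
    (N : Submodule ℂ F) : ℕ∞ :=
  if FiniteDimensional ℂ ↥N then (Module.finrank ℂ ↥N : ℕ∞) else ⊤

end Dimension

section ScalarCase

/-- Evaluation of an element of the scalar Hardy space (via its chosen representative). -/
def ev (g : H2 ℂ) (z : 𝕋) : ℂ := ((g : L2 ℂ) : 𝕋 → ℂ) z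

/-- Iterated evaluation of an element of `L²(𝕋, H²)`. -/
def ev2 (f : L2 (H2 ℂ)) (t z : 𝕋) : ℂ := ev ((f : 𝕋 → H2 ℂ) t) z

/-- A function `h ∈ H²` is inner if `|h(z)| = 1` for a.e. `z ∈ 𝕋`. -/
def IsInnerFn (g : H2 ℂ) : Prop := ∀ᵐ z ∂μT, ‖ev g z‖ = 1

lemma ev_zero : ∀ᵐ z ∂μT, ev (0 : H2 ℂ) z = 0 := by
  have h0 : ((0 : H2 ℂ) : L2 ℂ) = 0 := rfl
  unfold ev
  rw [h0]
  filter_upwards [Lp.coeFn_zero ℂ 2 μT] with z hz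
  rw [hz]
  rfl

lemma ev_add (u v : H2 ℂ) : ∀ᵐ z ∂μT, ev (u + v) z = ev u z + ev v z := by
  have h0 : ((u + v : H2 ℂ) : L2 ℂ) = (u : L2 ℂ) + (v : L2 ℂ) := rfl
  unfold ev
  rw [h0]
  filter_upwards [Lp.coeFn_add (u : L2 ℂ) (v : L2 ℂ)] with z hz
  rw [hz]
  rfl

lemma ev_smul (c : ℂ) (u : H2 ℂ) : ∀ᵐ z ∂μT, ev (c • u) z = c * ev u z := by
  have h0 : ((c • u : H2 ℂ) : L2 ℂ) = c • (u : L2 ℂ) := rfl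
  unfold ev
  rw [h0]
  filter_upwards [Lp.coeFn_smul c (u : L2 ℂ)] with z hz
  rw [hz]
  rfl

/-- For `w ∈ H²`, the subspace `w·H² = {w·k : k ∈ H²}` of `H²` (membership described via
a.e. pointwise multiplication of representatives). -/
def mulSet (w : H2 ℂ) : Submodule ℂ (H2 ℂ) where
  carrier := {u | ∃ k : H2 ℂ, ∀ᵐ z ∂μT, ev u z = ev w z * ev k z}
  zero_mem' := by
    refine ⟨0, ?_⟩
    filter_upwards [ev_zero] with z hz
    rw [hz, mul_zero]
  add_mem' := by
    rintro u v ⟨k₁, h₁⟩ ⟨k₂, h₂⟩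
    refine ⟨k₁ + k₂, ?_⟩
    filter_upwards [h₁, h₂, ev_add u v, ev_add k₁ k₂] with z e1 e2 e3 e4
    rw [e3, e1, e2, e4, mul_add]
  smul_mem' := by
    rintro c u ⟨k, h⟩
    refine ⟨c • k, ?_⟩
    filter_upwards [h, ev_smul c u, ev_smul c k] with z e1 e2 e3
    rw [e2, e1, e3]
    ring

/-- The set `φ·L²(𝕋, H²) = {φ g : g ∈ L²(𝕋,H²)}`, where `(φ g)(t)(z) = φ(t)(z)·g(t)(z)`. -/
def timesSet (φ : L2 (H2 ℂ)) : Set (L2 (H2 ℂ)) :=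
  {h | ∃ g : L2 (H2 ℂ), ∀ᵐ t ∂μT, ∀ᵐ z ∂μT, ev2 h t z = ev2 φ t z * ev2 g t z}

end ScalarCase

/-! For `f, g` in the wandering subspace `R = M ⊖ S M`, the `n`-th Fourier coefficient of the
integrable function `t ↦ ⟪f t, g t⟫` is `⟪f, z⁻ⁿ g⟫`. For `n ≠ 0` it vanishes, because `S^|n|`
maps `M` into `S M ⊥ R`; as an integrable function on the circle is determined by its Fourier
coefficients, `⟪f t, g t⟫ = ⟪f, g⟫` for almost every `t`. An orthonormal basis of the separable
space `R` is countable, so at almost every `t` its values form an orthonormal family in `K`,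
which has at most `dim K` elements. -/

section Uniqueness

open Filter Topology
open scoped NNReal BoundedContinuousFunction

variable {X : Type*} [PseudoMetricSpace X] [MeasurableSpace X] [BorelSpace X]
  {μ : Measure X} {E : Type*} [NormedAddCommGroup E] [NormedSpace ℝ E] [CompleteSpace E]

/- Thickened indicators of a closed set decrease to its indicator, so by dominated convergence
`v` has zero integral over every closed set. -/
theorem ae_eq_zero_of_forall_integral_nnreal_smul_eq_zero {v : X → E} (hv : Integrable v μ)
    (h : ∀ φ : X →ᵇ ℝ≥0, ∫ x, (φ x : ℝ) • v x ∂μ = 0) : v =ᵐ[μ] 0 := by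
  refine ae_eq_zero_of_forall_setIntegral_isClosed_eq_zero hv fun s hs => ?_
  have hδ (n : ℕ) : (0 : ℝ) < 1 / (n + 1) := Nat.one_div_pos_of_nat
  have hlim := thickenedIndicator_tendsto_indicator_closure hδ
    tendsto_one_div_add_atTop_nhds_zero_nat s
  rw [hs.closure_eq, tendsto_pi_nhds] at hlim
  have hpt (x : X) : Tendsto (fun n => (thickenedIndicator (hδ n) s x : ℝ) • v x) atTop
      (𝓝 (s.indicator v x)) := by
    have := ((NNReal.continuous_coe.tendsto _).comp (hlim x)).smul_const (v x)
    by_cases hx : x ∈ s <;> simpa [hx] using this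
  have hdom := tendsto_integral_of_dominated_convergence (fun x => ‖v x‖)
    (F := fun n x => (thickenedIndicator (hδ n) s x : ℝ) • v x)
    (fun n => (NNReal.continuous_coe.comp
      (thickenedIndicator (hδ n) s).continuous).aestronglyMeasurable.smul hv.1)
    hv.norm
    (fun n => ae_of_all _ fun x => by
      rw [norm_smul]
      exact mul_le_of_le_one_left (norm_nonneg _)
        (by simpa using thickenedIndicator_le_one (hδ n) s x))
    (ae_of_all _ hpt)
  rw [← integral_indicator hs.measurableSet]
  exact tendsto_nhds_unique hdom (by simp only [h]; exact tendsto_const_nhds)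

end Uniqueness

section FourierUniqueness

open AddCircle

variable {T : ℝ} [Fact (0 < T)]

theorem integral_mul_eq_zero_of_fourierCoeff_eq_zero {v : AddCircle T → ℂ}
    (hv : Integrable v haarAddCircle) (h : ∀ n, fourierCoeff v n = 0)
    (φ : C(AddCircle T, ℂ)) : ∫ t, φ t * v t ∂haarAddCircle = 0 := by
  have hint (φ : C(AddCircle T, ℂ)) :
      Integrable (fun t => φ t * v t) haarAddCircle :=
    hv.bdd_mul φ.continuous.aestronglyMeasurable (ae_of_all _ φ.norm_coe_le_norm)
  let Λ : C(AddCircle T, ℂ) →L[ℂ] ℂ := LinearMap.mkContinuous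
    { toFun := fun φ => ∫ t, φ t * v t ∂haarAddCircle
      map_add' := fun φ ψ => by
        simp only [ContinuousMap.add_apply, add_mul, integral_add (hint φ) (hint ψ)]
      map_smul' := fun c φ => by
        simp only [ContinuousMap.smul_apply, smul_eq_mul, mul_assoc, integral_const_mul,
          RingHom.id_apply] }
    (∫ t, ‖v t‖ ∂haarAddCircle) fun φ => by
      calc ‖∫ t, φ t * v t ∂haarAddCircle‖
          ≤ ∫ t, ‖φ‖ * ‖v t‖ ∂haarAddCircle :=
            norm_integral_le_of_norm_le (hv.norm.const_mul _) (ae_of_all _ fun t => by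
              rw [norm_mul]
              exact mul_le_mul_of_nonneg_right (φ.norm_coe_le_norm t) (norm_nonneg _))
        _ = _ := by rw [integral_const_mul, mul_comm]
  have hΛ : Λ = 0 := by
    refine ContinuousLinearMap.ext_on
      (Submodule.dense_iff_topologicalClosure_eq_top.2 span_fourier_closure_eq_top) ?_
    rintro _ ⟨n, rfl⟩
    simpa [Λ, fourierCoeff] using h (-n)
  exact DFunLike.congr_fun hΛ φ

theorem ae_eq_zero_of_fourierCoeff_eq_zero {v : AddCircle T → ℂ}
    (hv : Integrable v haarAddCircle) (h : ∀ n, fourierCoeff v n = 0) :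
    v =ᵐ[haarAddCircle] 0 :=
  ae_eq_zero_of_forall_integral_nnreal_smul_eq_zero hv fun φ => by
    simp only [Complex.real_smul]
    exact integral_mul_eq_zero_of_fourierCoeff_eq_zero hv h
      ⟨fun t => ((φ t : ℝ) : ℂ), by fun_prop⟩

end FourierUniqueness

universe u

section Orthonormal

open Cardinal

variable {𝕜 : Type*} [RCLike 𝕜]

theorem _root_.Orthonormal.countable {F : Type*} [SeminormedAddCommGroup F]
    [InnerProductSpace 𝕜 F] [TopologicalSpace.SeparableSpace F] {ι : Type*} {v : ι → F}
    (hv : Orthonormal 𝕜 v) : Countable ι := by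
  have hdist {i j : ι} (hij : i ≠ j) : 1 ≤ dist (v i) (v j) := by
    have h2 : ‖v i - v j‖ ^ 2 = 2 := by
      rw [@norm_sub_sq 𝕜, hv.1 i, hv.1 j, hv.2 hij]
      norm_num
    rw [dist_eq_norm]
    nlinarith [norm_nonneg (v i - v j)]
  refine Pairwise.countable_of_isOpen_disjoint (s := fun i => Metric.ball (v i) (1 / 2))
    (fun i j hij => Metric.ball_disjoint_ball ?_) (fun _ => Metric.isOpen_ball)
    fun i => ⟨v i, Metric.mem_ball_self (by norm_num)⟩
  linarith [hdist hij]

theorem _root_.Orthonormal.cardinal_mk_le_of_hilbertBasis {F ι κ : Type u}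
    [NormedAddCommGroup F] [InnerProductSpace 𝕜 F] [TopologicalSpace.SeparableSpace F]
    {v : ι → F} (hv : Orthonormal 𝕜 v) (b : HilbertBasis κ 𝕜 F) : #ι ≤ #κ := by
  rcases finite_or_infinite κ with hκ | hκ
  · have := Fintype.ofFinite κ
    calc #ι ≤ Module.rank 𝕜 F := hv.linearIndependent.cardinal_le_rank
      _ = #κ := b.toOrthonormalBasis.toBasis.mk_eq_rank''.symm
  · have := hv.countable
    exact mk_le_aleph0.trans (aleph0_le_mk κ)

end Orthonormal

section Wandering

variable {E : Type*} [NormedAddCommGroup E] [InnerProductSpace ℂ E]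

lemma mulF_zero_apply (f : L2 E) : mulF 0 f = f := by
  apply Lp.ext
  filter_upwards [coeFn_mulF 0 f] with t ht
  rw [ht, fourier_zero, one_smul]

lemma mulF_mulF (a b : ℤ) (f : L2 E) : mulF a (mulF b f) = mulF (a + b) f := by
  apply Lp.ext
  filter_upwards [coeFn_mulF a (mulF b f), coeFn_mulF b f, coeFn_mulF (a + b) f]
    with t h1 h2 h3
  rw [h1, h2, h3, smul_smul, ← fourier_add]

lemma inner_mulF_left (n : ℤ) (f g : L2 E) : ⟪mulF n f, g⟫_ℂ = ⟪f, mulF (-n) g⟫_ℂ := by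
  rw [L2.inner_def, L2.inner_def]
  refine integral_congr_ae ?_
  filter_upwards [coeFn_mulF n f, coeFn_mulF (-n) g] with t hf hg
  rw [hf, hg, inner_smul_left, inner_smul_right, fourier_neg]

lemma fourierCoeff_inner_apply (f g : L2 E) (n : ℤ) :
    fourierCoeff (fun t => ⟪(f : 𝕋 → E) t, (g : 𝕋 → E) t⟫_ℂ) n = ⟪f, mulF (-n) g⟫_ℂ := by
  rw [fourierCoeff, L2.inner_def]
  refine integral_congr_ae ?_
  filter_upwards [coeFn_mulF (-n) g] with t hg
  rw [hg, inner_smul_right, smul_eq_mul]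

lemma fourierCoeff_const (c : ℂ) (n : ℤ) :
    fourierCoeff (fun _ : 𝕋 => c) n = if n = 0 then c else 0 := by
  rw [fourierCoeff, integral_smul_const]
  split_ifs with hn
  · simp [hn]
  · rw [integral_fourier_eq_zero (neg_ne_zero.2 hn), zero_smul]

variable (K : Type) [NormedAddCommGroup K] [InnerProductSpace ℂ K] [CompleteSpace K]

def wanderingSubspace (M : Submodule ℂ (H2 K)) : Submodule ℂ (H2 K) :=
  M ⊓ (M.map (S K : H2 K →ₗ[ℂ] H2 K))ᗮ

variable {K}

lemma coe_S_apply (f : H2 K) : ((S K f : H2 K) : L2 K) = mulF 1 (f : L2 K) := rfl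

lemma coe_iterate_S (n : ℕ) (f : H2 K) :
    (((S K)^[n] f : H2 K) : L2 K) = mulF n (f : L2 K) := by
  induction n with
  | zero => exact (mulF_zero_apply _).symm
  | succ n ih =>
    rw [Function.iterate_succ_apply', coe_S_apply, ih, mulF_mulF, add_comm]
    push_cast
    rfl

lemma iterate_S_mem_map {M : Submodule ℂ (H2 K)} (hMinv : ∀ f ∈ M, S K f ∈ M) {f : H2 K}
    (hf : f ∈ M) {n : ℕ} (hn : n ≠ 0) : (S K)^[n] f ∈ M.map (S K : H2 K →ₗ[ℂ] H2 K) := by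
  obtain ⟨n, rfl⟩ := Nat.exists_eq_succ_of_ne_zero hn
  rw [Function.iterate_succ_apply']
  exact Submodule.mem_map_of_mem (Set.MapsTo.iterate hMinv n hf)

lemma inner_mulF_eq_zero_of_mem_wanderingSubspace {M : Submodule ℂ (H2 K)}
    (hMinv : ∀ f ∈ M, S K f ∈ M) {f g : H2 K} (hf : f ∈ wanderingSubspace K M)
    (hg : g ∈ wanderingSubspace K M) {n : ℤ} (hn : n ≠ 0) :
    ⟪(f : L2 K), mulF n (g : L2 K)⟫_ℂ = 0 := by
  rcases hn.lt_or_gt with hneg | hpos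
  · obtain ⟨m, rfl⟩ := Int.exists_eq_neg_ofNat hneg.le
    rw [← inner_mulF_left, ← coe_iterate_S, ← Submodule.coe_inner]
    exact (Submodule.mem_orthogonal _ _).1 hg.2 _
      (iterate_S_mem_map hMinv hf.1 (by rintro rfl; simp at hneg))
  · obtain ⟨m, rfl⟩ := Int.eq_ofNat_of_zero_le hpos.le
    rw [← coe_iterate_S, ← Submodule.coe_inner]
    exact (Submodule.mem_orthogonal' _ _).1 hf.2 _
      (iterate_S_mem_map hMinv hg.1 (by rintro rfl; simp at hpos))

theorem inner_apply_ae_eq_inner_of_mem_wanderingSubspace {M : Submodule ℂ (H2 K)}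
    (hMinv : ∀ f ∈ M, S K f ∈ M) {f g : H2 K} (hf : f ∈ wanderingSubspace K M)
    (hg : g ∈ wanderingSubspace K M) :
    ∀ᵐ t ∂μT,
      ⟪((f : L2 K) : 𝕋 → K) t, ((g : L2 K) : 𝕋 → K) t⟫_ℂ = ⟪(f : L2 K), (g : L2 K)⟫_ℂ := by
  set c := ⟪(f : L2 K), (g : L2 K)⟫_ℂ
  have hint := L2.integrable_inner (𝕜 := ℂ) (f : L2 K) (g : L2 K)
  have hcoeff (n : ℤ) :
      fourierCoeff
        ((fun t => ⟪((f : L2 K) : 𝕋 → K) t, ((g : L2 K) : 𝕋 → K) t⟫_ℂ) + fun _ => -c) n = 0 := by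
    rw [fourierCoeff.add hint (integrable_const _), Pi.add_apply, fourierCoeff_inner_apply,
      fourierCoeff_const]
    split_ifs with hn
    · rw [hn, neg_zero, mulF_zero_apply, add_neg_cancel]
    · rw [inner_mulF_eq_zero_of_mem_wanderingSubspace hMinv hf hg (neg_ne_zero.2 hn), add_zero]
  filter_upwards [ae_eq_zero_of_fourierCoeff_eq_zero (hint.add (integrable_const _)) hcoeff]
    with t ht
  simpa [← sub_eq_add_neg, sub_eq_zero] using ht

theorem exists_orthonormal_apply_of_wanderingSubspace {M : Submodule ℂ (H2 K)}
    (hMinv : ∀ f ∈ M, S K f ∈ M) {ι : Type*} [Countable ι] {e : ι → wanderingSubspace K M}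
    (he : Orthonormal ℂ e) : ∃ t, Orthonormal ℂ fun i => (((e i : H2 K) : L2 K) : 𝕋 → K) t := by
  classical
  rw [orthonormal_iff_ite] at he
  have hae : ∀ᵐ t ∂μT, ∀ i j, ⟪(((e i : H2 K) : L2 K) : 𝕋 → K) t,
      (((e j : H2 K) : L2 K) : 𝕋 → K) t⟫_ℂ = if i = j then 1 else 0 := by
    simp only [ae_all_iff]
    intro i j
    filter_upwards [inner_apply_ae_eq_inner_of_mem_wanderingSubspace hMinv (e i).2 (e j).2]
      with t ht
    rw [ht, ← he i j]
    rfl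
  obtain ⟨t, ht⟩ := hae.exists
  exact ⟨t, orthonormal_iff_ite.2 ht⟩

end Wandering

section Statements

variable (K : Type) [NormedAddCommGroup K] [InnerProductSpace ℂ K] [CompleteSpace K]
  [SecondCountableTopology K]

theorem statement4 (M : Submodule ℂ (H2 K))
    (hMinv : ∀ f ∈ M, S K f ∈ M) :
    ∀ (ι κ : Type) (_ : HilbertBasis ι ℂ ↥(M ⊓ (Submodule.map (S K : H2 K →ₗ[ℂ] H2 K) M)ᗮ))
      (_ : HilbertBasis κ ℂ K), Cardinal.mk ι ≤ Cardinal.mk κ := by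
  intro ι κ bR bK
  -- needed for the instance `SecondCountableTopology (L2 K)`
  have : Fact ((2 : ℝ≥0∞) ≠ ∞) := ⟨ENNReal.ofNat_ne_top⟩
  have : Countable ι := bR.orthonormal.countable
  obtain ⟨t, ht⟩ := exists_orthonormal_apply_of_wanderingSubspace hMinv (M := M) bR.orthonormal
  exact ht.cardinal_mk_le_of_hilbertBasis bK

end Statements

end ShiftPaper
end
end

section
/- Let K be a separable complex Hilbert space. If W ⊆ L²(𝕋,H²_K) is a full-Hardy subspace with base J, then W⊥ is also a full-Hardy subspace, with base the measurable range function J⊥ given by J⊥(λ) = (J(λ))⊥ for a.e. λ ∈ 𝕋. -/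
noncomputable section

open MeasureTheory Complex Submodule
open scoped InnerProductSpace ENNReal ComplexConjugate

set_option synthInstance.maxHeartbeats 1000000
set_option maxHeartbeats 1600000

namespace ShiftPaper

/-!
Fibrewise, `H²_N ⊥ H²_{N⊥}`, which gives `{f : f(t) ∈ H²_{J(t)⊥} a.e.} ⊆ W⊥`. Conversely, let
`f ⊥ W` and let `(s_k)` be dense in `K`. For every measurable `A ⊆ 𝕋` the function
`t ↦ 1_A(t) zⁿ P_{J(t)} s_k` lies in `W`, so `⟪zⁿ P_{J(t)} s_k, f(t)⟫ = 0` for a.e. `t`, for all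
`n, k` at once. By density and self-adjointness of `P_{J(t)}`, the pointwise projection
`z ↦ P_{J(t)} f(t)(z)` is then orthogonal to every `zᵐ x` with `m ∈ ℤ`, hence vanishes, i.e.
`f(t) ∈ H²_{J(t)⊥}`. The test functions are measurable in `t` because `K` is separable and
`‖P_{J(t)} x - y‖² = Re⟪P_{J(t)} x, x⟫ - 2 Re⟪P_{J(t)} x, y⟫ + ‖y‖²` is measurable for all `y`.
Finally `J⊥` is measurable because `P_{J(t)⊥} = 1 - P_{J(t)}`.
-/

lemma measurable_of_forall_measurable_dist {α E : Type*} [MeasurableSpace α] [MetricSpace E]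
    [SecondCountableTopology E] [MeasurableSpace E] [BorelSpace E] {f : α → E}
    (hf : ∀ y, Measurable fun a => dist (f a) y) : Measurable f := by
  classical
  rcases isEmpty_or_nonempty α with hα | hα
  · exact measurable_of_empty f
  have : Nonempty E := hα.map f
  let s := TopologicalSpace.denseSeq E
  have hclose : ∀ (n : ℕ) a, ∃ k, dist (f a) (s k) < 1 / (n + 1) := fun n a =>
    Metric.denseRange_iff.1 (TopologicalSpace.denseRange_denseSeq E) (f a) _ Nat.one_div_pos_of_nat
  refine measurable_of_tendsto_metrizable (f := fun n a => s (Nat.find (hclose n a)))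
    (fun n => Measurable.find (fun k => measurable_const)
      (fun k => measurableSet_lt (hf (s k)) measurable_const) (hclose n))
    (tendsto_pi_nhds.2 fun a => tendsto_iff_dist_tendsto_zero.2 ?_)
  refine squeeze_zero (fun n => dist_nonneg) (fun n => ?_)
    tendsto_one_div_add_atTop_nhds_zero_nat
  rw [dist_comm]
  exact (Nat.find_spec (hclose n a)).le

section RangeFunction

variable {F : Type*} [NormedAddCommGroup F] [InnerProductSpace ℂ F] [CompleteSpace F]

lemma projTo_eq_starProjection (N : Submodule ℂ F) [N.HasOrthogonalProjection] (x : F) :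
    projTo N x = N.starProjection x := by
  have hN : IsClosed (N : Set F) := N.orthogonal_orthogonal ▸ Nᗮ.isClosed_orthogonal
  rw [projTo, dif_pos hN]
  rfl

namespace IsMeasRange

variable {J : 𝕋 → Submodule ℂ F} (hJ : IsMeasRange J)
include hJ

lemma hasOrthogonalProjection (t : 𝕋) : (J t).HasOrthogonalProjection :=
  haveI : CompleteSpace (J t) := (hJ.1 t).completeSpace_coe
  inferInstance

lemma orthogonal : IsMeasRange fun t => (J t)ᗮ := by
  refine ⟨fun t => (J t).isClosed_orthogonal, fun x y => ?_⟩
  have hP : ∀ t, projTo (J t)ᗮ x = x - projTo (J t) x := fun t => by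
    have := hJ.hasOrthogonalProjection t
    rw [projTo_eq_starProjection, projTo_eq_starProjection, starProjection_orthogonal_val]
  simp_rw [hP, inner_sub_left]
  exact measurable_const.sub (hJ.2 x y)

lemma measurable_dist_projTo (x y : F) : Measurable fun t => dist (projTo (J t) x) y := by
  have hsq : ∀ t, dist (projTo (J t) x) y ^ 2 = RCLike.re (inner ℂ (projTo (J t) x) x : ℂ)
      - 2 * RCLike.re (inner ℂ (projTo (J t) x) y : ℂ) + ‖y‖ ^ 2 := fun t => by
    have := hJ.hasOrthogonalProjection t
    rw [dist_eq_norm, norm_sub_sq (𝕜 := ℂ), projTo_eq_starProjection,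
      re_inner_starProjection_eq_normSq]
    rfl
  have hmeas : Measurable fun t => dist (projTo (J t) x) y ^ 2 := by
    simp_rw [hsq]
    exact ((RCLike.continuous_re.measurable.comp (hJ.2 x x)).sub
      ((RCLike.continuous_re.measurable.comp (hJ.2 x y)).const_mul 2)).add measurable_const
  simpa only [Real.sqrt_sq dist_nonneg] using hmeas.sqrt

lemma stronglyMeasurable_projTo [SecondCountableTopology F] (x : F) :
    StronglyMeasurable fun t => projTo (J t) x := by
  borelize F
  exact (measurable_of_forall_measurable_dist (hJ.measurable_dist_projTo x)).stronglyMeasurable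

end IsMeasRange

end RangeFunction

section Exponentials

variable {K : Type} [NormedAddCommGroup K] [InnerProductSpace ℂ K]

lemma mem_Hardy_iff {u : L2 K} :
    u ∈ Hardy K ↔ ∀ m : ℤ, m < 0 → ∀ x : K, (inner ℂ (expVec K m x) u : ℂ) = 0 := by
  simp only [Hardy, Submodule.mem_iInf, LinearMap.mem_ker, ContinuousLinearMap.coe_coe,
    innerSL_apply_apply]

variable [CompleteSpace K]

lemma inner_expVec_expVec (m n : ℤ) (x y : K) :
    (inner ℂ (expVec K m x) (expVec K n y) : ℂ)
      = (∫ t : 𝕋, fourier (n - m) t ∂μT) * inner ℂ x y := by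
  rw [L2.inner_def, ← integral_mul_const]
  refine integral_congr_ae ?_
  filter_upwards [coeFn_expVec K m x, coeFn_expVec K n y] with t hx hy
  rw [hx, hy, inner_smul_left, inner_smul_right, ← fourier_neg, ← mul_assoc, ← fourier_add,
    neg_add_eq_sub]

lemma expVec_mem_Hardy {n : ℤ} (hn : 0 ≤ n) (x : K) : expVec K n x ∈ Hardy K :=
  mem_Hardy_iff.2 fun m hm y => by
    rw [inner_expVec_expVec, integral_fourier_eq_zero (by omega), zero_mul]

lemma norm_expVec (n : ℤ) (x : K) : ‖expVec K n x‖ = ‖x‖ := by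
  have h : (inner ℂ (expVec K n x) (expVec K n x) : ℂ) = inner ℂ x x := by
    rw [inner_expVec_expVec, sub_self]
    simp
  rw [norm_eq_sqrt_re_inner (𝕜 := ℂ), norm_eq_sqrt_re_inner (𝕜 := ℂ) x, h]

lemma expVec_add (n : ℤ) (x y : K) : expVec K n (x + y) = expVec K n x + expVec K n y := by
  refine Lp.ext ?_
  filter_upwards [coeFn_expVec K n (x + y), coeFn_expVec K n x, coeFn_expVec K n y,
    Lp.coeFn_add (expVec K n x) (expVec K n y)] with t hxy hx hy hsum
  rw [hxy, hsum, Pi.add_apply, hx, hy, smul_add]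

lemma expVec_smul (n : ℤ) (c : ℂ) (x : K) : expVec K n (c • x) = c • expVec K n x := by
  refine Lp.ext ?_
  filter_upwards [coeFn_expVec K n (c • x), coeFn_expVec K n x,
    Lp.coeFn_smul c (expVec K n x)] with t hcx hx hsmul
  rw [hcx, hsmul, Pi.smul_apply, hx, smul_comm]

variable (K) in
def expVecL (n : ℤ) : K →L[ℂ] L2 K :=
  LinearMap.mkContinuous ⟨⟨expVec K n, expVec_add n⟩, expVec_smul n⟩ 1
    fun x => by simp [norm_expVec]

variable (K) in
def expVecHardy (n : ℕ) : K →L[ℂ] H2 K :=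
  (expVecL K n).codRestrict (Hardy K) fun x => expVec_mem_Hardy (Int.natCast_nonneg n) x

lemma coe_expVecHardy (n : ℕ) (x : K) : (expVecHardy K n x : L2 K) = expVec K n x := rfl

lemma norm_expVecHardy (n : ℕ) (x : K) : ‖expVecHardy K n x‖ = ‖x‖ := norm_expVec n x

lemma eq_zero_of_forall_inner_expVec [SecondCountableTopology K] {u : L2 K}
    (h : ∀ (m : ℤ) (x : K), (inner ℂ (expVec K m x) u : ℂ) = 0) : u = 0 := by
  rw [Lp.eq_zero_iff_ae_eq_zero]
  refine ae_eq_zero_of_forall_inner (𝕜 := ℂ) fun x => ?_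
  let φ : L2 ℂ := (innerSL ℂ x).compLp u
  have hφ : φ = 0 := by
    refine fourierBasis.repr.injective (lp.ext (funext fun m => ?_))
    rw [map_zero, lp.coeFn_zero, Pi.zero_apply, HilbertBasis.repr_apply_apply, coe_fourierBasis,
      ← h m x, L2.inner_def, L2.inner_def]
    refine integral_congr_ae ?_
    filter_upwards [coeFn_fourierLp (T := 1) 2 m, (innerSL ℂ x).coeFn_compLp u,
      coeFn_expVec K m x] with t hm hφt hx
    rw [hm, hφt, hx, inner_smul_left]
    simp [RCLike.inner_apply, mul_comm]
  filter_upwards [(innerSL ℂ x).coeFn_compLp u, hφ ▸ Lp.coeFn_zero ℂ 2 μT] with t hφt hzero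
  exact hφt.symm.trans hzero

lemma inner_expVec_compLp {A : K →L[ℂ] K} (hA : (A : K →ₗ[ℂ] K).IsSymmetric) (m : ℤ) (x : K)
    (u : L2 K) :
    (inner ℂ (expVec K m x) (A.compLp u) : ℂ) = inner ℂ (expVec K m (A x)) u := by
  rw [L2.inner_def, L2.inner_def]
  refine integral_congr_ae ?_
  filter_upwards [coeFn_expVec K m x, coeFn_expVec K m (A x), A.coeFn_compLp u]
    with t hx hAx hAu
  rw [hx, hAx, hAu, inner_smul_left, inner_smul_left]
  exact congrArg _ (hA x _).symm

end Exponentials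

section HardyFibre

variable {K : Type} [NormedAddCommGroup K] [InnerProductSpace ℂ K]

lemma expVecHardy_mem_hardyIn [CompleteSpace K] {N : Submodule ℂ K} (n : ℕ) {x : K}
    (hx : x ∈ N) :
    expVecHardy K n x ∈ hardyIn K N := by
  filter_upwards [coeFn_expVec K n x] with z hz
  rw [coe_expVecHardy, hz]
  exact N.smul_mem _ hx

lemma inner_eq_zero_of_mem_hardyIn_of_mem_hardyIn_orthogonal {N : Submodule ℂ K} {u v : H2 K}
    (hu : u ∈ hardyIn K N) (hv : v ∈ hardyIn K Nᗮ) : (inner ℂ u v : ℂ) = 0 := by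
  rw [Submodule.coe_inner, L2.inner_def]
  refine integral_eq_zero_of_ae ?_
  filter_upwards [hu, hv] with z huz hvz
  exact (N.mem_orthogonal _).1 hvz _ huz

variable [CompleteSpace K]

lemma mem_hardyIn_orthogonal_of_forall_inner [SecondCountableTopology K]
    {N : Submodule ℂ K} [N.HasOrthogonalProjection] {v : H2 K}
    (h : ∀ (n : ℕ) (x : K), (inner ℂ (expVecHardy K n (N.starProjection x)) v : ℂ) = 0) :
    v ∈ hardyIn K Nᗮ := by
  -- `⟪zᵐ x, P_N v⟫ = ⟪zᵐ P_N x, v⟫` vanishes for `m < 0` as `v ∈ H²`, and for `m ≥ 0` by `h`.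
  have hPv : N.starProjection.compLp (v : L2 K) = 0 := by
    refine eq_zero_of_forall_inner_expVec fun m x => ?_
    rw [inner_expVec_compLp N.starProjection_isSymmetric]
    rcases lt_or_ge m 0 with hm | hm
    · exact mem_Hardy_iff.1 v.2 m hm _
    · lift m to ℕ using hm
      exact h m x
  filter_upwards [N.starProjection.coeFn_compLp (v : L2 K), hPv ▸ Lp.coeFn_zero K 2 μT]
    with z hPvz hzero
  rw [← N.ker_starProjection]
  exact hPvz.symm.trans hzero

lemma mem_hardyIn_orthogonal_of_denseRange [SecondCountableTopology K]
    {N : Submodule ℂ K} [N.HasOrthogonalProjection] {ι : Type*} {s : ι → K} (hs : DenseRange s)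
    {v : H2 K}
    (h : ∀ (n : ℕ) (i : ι), (inner ℂ (expVecHardy K n (N.starProjection (s i))) v : ℂ) = 0) :
    v ∈ hardyIn K Nᗮ :=
  mem_hardyIn_orthogonal_of_forall_inner fun n x => hs.induction_on x
    (isClosed_eq (((expVecHardy K n).continuous.comp N.starProjection.continuous).inner
      continuous_const) continuous_const) (h n)

end HardyFibre

lemma ae_inner_eq_zero_of_forall_inner_indicator {α 𝕜 E : Type*} [MeasurableSpace α]
    {μ : Measure α} [RCLike 𝕜] [NormedAddCommGroup E] [InnerProductSpace 𝕜 E] (f : Lp E 2 μ)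
    {g : α → E} (hg : MemLp g 2 μ)
    (h : ∀ A (hA : MeasurableSet A), (inner 𝕜 ((hg.indicator hA).toLp _) f : 𝕜) = 0) :
    ∀ᵐ a ∂μ, (inner 𝕜 (g a) (f a) : 𝕜) = 0 := by
  have hint : Integrable (fun a => (inner 𝕜 (g a) (f a) : 𝕜)) μ :=
    (L2.integrable_inner (hg.toLp g) f).congr <| by
      filter_upwards [hg.coeFn_toLp] with a ha
      rw [ha]
  refine hint.ae_eq_zero_of_forall_setIntegral_eq_zero fun A hA _ => ?_
  rw [← integral_indicator hA, ← h A hA, L2.inner_def]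
  refine integral_congr_ae ?_
  filter_upwards [(hg.indicator hA).coeFn_toLp] with a ha
  rw [ha]
  by_cases haA : a ∈ A <;> simp [haA]

section FullHardy

variable {K : Type} [NormedAddCommGroup K] [InnerProductSpace ℂ K]
  {W : Submodule ℂ (L2 (H2 K))} {J : 𝕋 → Submodule ℂ K}

lemma fullHardySet_orthogonal_subset_orthogonal
    (hW : (W : Set (L2 (H2 K))) = fullHardySet K J) :
    fullHardySet K (fun t => (J t)ᗮ)
      ⊆ (@Submodule.orthogonal ℂ (L2 (H2 K)) _ _ _ W : Set (L2 (H2 K))) := fun f hf u hu => by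
  rw [← SetLike.mem_coe, hW] at hu
  rw [L2.inner_def]
  refine integral_eq_zero_of_ae ?_
  filter_upwards [hu, hf] with t hut hft
  exact inner_eq_zero_of_mem_hardyIn_of_mem_hardyIn_orthogonal hut hft

lemma ae_inner_eq_zero_of_mem_orthogonal (hW : (W : Set (L2 (H2 K))) = fullHardySet K J)
    {f : L2 (H2 K)} (hf : f ∈ @Submodule.orthogonal ℂ (L2 (H2 K)) _ _ _ W)
    {g : 𝕋 → H2 K} (hg : MemLp g 2 μT) (hgJ : ∀ t, g t ∈ hardyIn K (J t)) :
    ∀ᵐ t ∂μT, (inner ℂ (g t) (f t) : ℂ) = 0 := by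
  refine ae_inner_eq_zero_of_forall_inner_indicator f hg fun A hA => ?_
  refine Submodule.inner_right_of_mem_orthogonal ?_ hf
  rw [← SetLike.mem_coe, hW]
  filter_upwards [(hg.indicator hA).coeFn_toLp] with t ht
  rw [ht]
  by_cases htA : t ∈ A
  · simpa [htA] using hgJ t
  · simp [htA]

lemma orthogonal_subset_fullHardySet_orthogonal [CompleteSpace K] [SecondCountableTopology K]
    (hJ : IsMeasRange J) (hW : (W : Set (L2 (H2 K))) = fullHardySet K J) :
    (@Submodule.orthogonal ℂ (L2 (H2 K)) _ _ _ W : Set (L2 (H2 K)))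
      ⊆ fullHardySet K fun t => (J t)ᗮ := fun f hf => by
  have : ∀ t, (J t).HasOrthogonalProjection := hJ.hasOrthogonalProjection
  have : Nonempty K := ⟨0⟩
  let s := TopologicalSpace.denseSeq K
  have htest : ∀ n k : ℕ,
      ∀ᵐ t ∂μT, (inner ℂ (expVecHardy K n ((J t).starProjection (s k))) (f t) : ℂ) = 0 := by
    intro n k
    refine ae_inner_eq_zero_of_mem_orthogonal hW hf ?_ fun t => ?_
    · refine MemLp.of_bound ?_ ‖s k‖ (Filter.Eventually.of_forall fun t => ?_)
      · simp_rw [← projTo_eq_starProjection]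
        exact ((expVecHardy K n).continuous.comp_stronglyMeasurable
          (hJ.stronglyMeasurable_projTo (s k))).aestronglyMeasurable
      · exact (norm_expVecHardy n _).trans_le ((J t).norm_starProjection_apply_le _)
    · exact expVecHardy_mem_hardyIn n ((J t).starProjection_apply_mem _)
  filter_upwards [ae_all_iff.2 fun n => ae_all_iff.2 (htest n)] with t ht
  exact mem_hardyIn_orthogonal_of_denseRange (TopologicalSpace.denseRange_denseSeq K) ht

end FullHardy

section Statements

variable (K : Type) [NormedAddCommGroup K] [InnerProductSpace ℂ K] [CompleteSpace K]
  [SecondCountableTopology K]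

theorem statement12 (W : Submodule ℂ (L2 (H2 K))) (J : 𝕋 → Submodule ℂ K)
    (hJ : IsMeasRange J) (hW : (W : Set (L2 (H2 K))) = fullHardySet K J) :
    IsMeasRange (fun t => (J t)ᗮ) ∧
      (@Submodule.orthogonal ℂ (L2 (H2 K)) _ _ _ W : Set (L2 (H2 K))) = fullHardySet K (fun t => (J t)ᗮ) :=
  ⟨hJ.orthogonal,
    (orthogonal_subset_fullHardySet_orthogonal hJ hW).antisymm
      (fullHardySet_orthogonal_subset_orthogonal hW)⟩

end Statements

end ShiftPaper
end
end

section
/- Let H be a complex Hilbert space, let T be an isometry on H, and let V be a partial isometry on H that commutes with T. Then the initial space of V is reducing for T. -/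
/-!
Splitting `x` along `W ⊕ Wᗮ` shows `‖V x‖ = ‖P_W x‖`, so `W = {x | ‖V x‖ = ‖x‖}` and
`Wᗮ = ker V`. An isometry commuting with `V` preserves both conditions.
-/

open scoped InnerProductSpace

namespace Submodule

variable {𝕜 E F : Type*} [RCLike 𝕜] [NormedAddCommGroup E] [InnerProductSpace 𝕜 E]
  [NormedAddCommGroup F] [NormedSpace 𝕜 F]
  {K : Submodule 𝕜 E} [K.HasOrthogonalProjection] {V : E →L[𝕜] F}

theorem norm_apply_eq_norm_starProjection (hV₁ : ∀ f ∈ K, ‖V f‖ = ‖f‖)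
    (hV₂ : ∀ f ∈ Kᗮ, V f = 0) (x : E) : ‖V x‖ = ‖K.starProjection x‖ := by
  have hx : x = K.starProjection x + (x - K.starProjection x) := by abel
  rw [hx, map_add, hV₂ _ (K.sub_starProjection_mem_orthogonal x), add_zero,
    hV₁ _ (K.starProjection_apply_mem x), ← hx]

theorem mem_iff_norm_apply_eq (hV₁ : ∀ f ∈ K, ‖V f‖ = ‖f‖) (hV₂ : ∀ f ∈ Kᗮ, V f = 0)
    {x : E} : x ∈ K ↔ ‖V x‖ = ‖x‖ := by
  rw [K.mem_iff_norm_starProjection, norm_apply_eq_norm_starProjection hV₁ hV₂]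

theorem mem_orthogonal_iff_apply_eq_zero (hV₁ : ∀ f ∈ K, ‖V f‖ = ‖f‖)
    (hV₂ : ∀ f ∈ Kᗮ, V f = 0) {x : E} : x ∈ Kᗮ ↔ V x = 0 := by
  rw [← K.starProjection_apply_eq_zero_iff, ← norm_eq_zero (a := V x), ← norm_eq_zero,
    norm_apply_eq_norm_starProjection hV₁ hV₂]

end Submodule

theorem statement15 {H : Type*} [NormedAddCommGroup H] [InnerProductSpace ℂ H] [CompleteSpace H]
    (T V : H →L[ℂ] H) (hT : Isometry T)
    (W : Submodule ℂ H) (hWc : IsClosed ((W : Set H)))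
    (hV1 : ∀ f ∈ W, ‖V f‖ = ‖f‖) (hV2 : ∀ f ∈ Wᗮ, V f = 0)
    (hcomm : ∀ f, V (T f) = T (V f)) :
    (∀ f ∈ W, T f ∈ W) ∧ (∀ f ∈ Wᗮ, T f ∈ Wᗮ) := by
  have : CompleteSpace W := hWc.completeSpace_coe
  have hTnorm (x : H) : ‖T x‖ = ‖x‖ := hT.norm_map_of_map_zero (map_zero T) x
  refine ⟨fun f hf => ?_, fun f hf => ?_⟩
  · rw [Submodule.mem_iff_norm_apply_eq hV1 hV2] at hf ⊢
    rw [hcomm, hTnorm, hTnorm, hf]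
  · rw [Submodule.mem_orthogonal_iff_apply_eq_zero hV1 hV2] at hf ⊢
    rw [hcomm, hf, map_zero]
end
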